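/- Every finitely generated residually finite group is Hopfian: every surjective group endomorphism of such a group is an isomorphism. -/

import Mathlib

/-!
For a surjective endomorphism `φ` of a finitely generated group `G` and a finite group `Q`,
precomposition with `φ` is an injective self-map of the finite set `Hom(G, Q)`, hence a bijection.
So every homomorphism `G → Q` factors through `φ` and kills `ker φ`; residual finiteness then
forces `ker φ` to be trivial.
-/

open Function

theorem Group.FG.finite_monoidHom {G M : Type*} [Group G] [Monoid M] [Finite M]
    (hG : Group.FG G) : Finite (G →* M) := by
  obtain ⟨S, hS⟩ := hG
  refine Finite.of_injective (fun f : G →* M => fun s : S => f s) fun f g hfg => ?_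
  exact MonoidHom.eq_of_eqOn_dense hS fun x hx => congrFun hfg ⟨x, hx⟩

theorem Group.FG.ker_le_ker_of_surjective {G M : Type*} [Group G] [Monoid M] [Finite M]
    (hG : Group.FG G) {φ : G →* G} (hφ : Surjective φ) (ψ : G →* M) : φ.ker ≤ ψ.ker := by
  have := hG.finite_monoidHom (M := M)
  have hcomp_inj : Injective fun α : G →* M => α.comp φ :=
    fun _ _ h => (MonoidHom.cancel_right hφ).mp h
  obtain ⟨α, rfl⟩ := Finite.surjective_of_injective hcomp_inj ψ
  exact (MonoidHom.comap_ker α φ).symm ▸ φ.ker_le_comap α.ker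

/-- Malcev: every finitely generated residually finite group is Hopfian. -/
theorem stmt1 {G : Type} [Group G] (hfg : Group.FG G)
    (hrf : ∀ g : G, g ≠ 1 →
      ∃ (Q : Type) (_ : Group Q) (_ : Finite Q) (φ : G →* Q), φ g ≠ 1)
    (φ : G →* G) (hsurj : Function.Surjective φ) : Function.Bijective φ := by
  refine ⟨(injective_iff_map_eq_one φ).mpr fun g hg => ?_, hsurj⟩
  by_contra hne
  obtain ⟨Q, _, _, ψ, hψ⟩ := hrf g hne
  exact hψ (hfg.ker_le_ker_of_surjective hsurj ψ hg)
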